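/- (Counterfactual imputation recovers the transformation under isotone coupling.) Suppose Y_i(1) = T(Y_i(0)) for all i with T strictly increasing, and suppose the multiset of control-group baseline values {Y_i(0) : W_i = 0} equals the multiset of treated-group baseline values {Y_i(0) : W_i = 1}, all values distinct. Let F̂_0 be the empirical CDF of observed controls {Y_i : W_i = 0} and F̂_1 the empirical CDF of observed treated outcomes {Y_i : W_i = 1}. Then the imputation Ỹ_i(0) = F̂_0^{-1}(F̂_1(Y_i)) for treated units satisfies Ỹ_i(0) = Y_i(0) exactly, and Ỹ_i(1) = F̂_1^{-1}(F̂_0(Y_i)) for control units satisfies Ỹ_i(1) = Y_i(1) exactly. -/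

import Mathlib

open Finset

/-- under the isotone coupling `Yᵢ(1) = T(Yᵢ(0))` with `T` strictly
increasing, if the multisets of baseline values in the control and treated groups
coincide and values are distinct within each group, then the rank-matching imputations
`Ỹᵢ(0) = F̂₀⁻¹(F̂₁(Yᵢ))` (treated) and `Ỹᵢ(1) = F̂₁⁻¹(F̂₀(Yᵢ))` (controls) recover the
true counterfactuals exactly. -/
theorem counterfactual_imputation_exact
    (n : ℕ)
    (W : Fin n → Bool) (Y0 Y1 Y : Fin n → ℝ)
    (T : ℝ → ℝ) (hT : StrictMono T)
    (hcoup : ∀ i, Y1 i = T (Y0 i))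
    (hobs : ∀ i, Y i = if W i then Y1 i else Y0 i)
    -- the multiset of control baseline values equals the multiset of treated ones
    (hmatch : (univ.filter (fun i => W i = false)).val.map Y0
            = (univ.filter (fun i => W i = true)).val.map Y0)
    -- all baseline values distinct within each treatment group
    (hdistinct : ∀ i j, W i = W j → Y0 i = Y0 j → i = j)
    (n0 n1 : ℕ)
    (hn0 : n0 = (univ.filter (fun i => W i = false)).card) (hn0pos : 0 < n0)
    (hn1 : n1 = (univ.filter (fun i => W i = true)).card) (hn1pos : 0 < n1)
    (F0 F1 : ℝ → ℝ)
    (hF0 : ∀ t, F0 t = ((univ.filter (fun i => W i = false ∧ Y i ≤ t)).card : ℝ) / n0)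
    (hF1 : ∀ t, F1 t = ((univ.filter (fun i => W i = true ∧ Y i ≤ t)).card : ℝ) / n1)
    (F0inv F1inv : ℝ → ℝ)
    (hinv0 : ∀ u, F0inv u = sInf {t : ℝ | u ≤ F0 t})
    (hinv1 : ∀ u, F1inv u = sInf {t : ℝ | u ≤ F1 t}) :
    (∀ i, W i = true → F0inv (F1 (Y i)) = Y0 i) ∧
    (∀ i, W i = false → F1inv (F0 (Y i)) = Y1 i) := by
  -- counts of baseline values below a threshold, per group
  have hcnt : ∀ a : ℝ, (univ.filter (fun j => W j = false ∧ Y0 j ≤ a)).card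
      = (univ.filter (fun j => W j = true ∧ Y0 j ≤ a)).card := by
    intro a
    have h := congrArg (Multiset.countP (fun y : ℝ => y ≤ a)) hmatch
    rw [Multiset.countP_map, Multiset.countP_map] at h
    have e1 : ∀ b : Bool, ((univ.filter (fun i => W i = b)).val.filter
        (fun j => Y0 j ≤ a)).card = (univ.filter (fun j => W j = b ∧ Y0 j ≤ a)).card := by
      intro b
      rw [show ((univ.filter (fun i => W i = b)).val.filter (fun j => Y0 j ≤ a))
          = ((univ.filter (fun i => W i = b)).filter (fun j => Y0 j ≤ a)).val from rfl]
      rw [Finset.filter_filter]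
      rfl
    rw [e1 false, e1 true] at h
    exact h
  have hn01 : n0 = n1 := by
    rw [hn0, hn1]
    have h := congrArg Multiset.card hmatch
    simpa [Finset.card] using h
  have hn0pos' : (0:ℝ) < (n0 : ℝ) := by exact_mod_cast hn0pos
  have hn1pos' : (0:ℝ) < (n1 : ℝ) := by exact_mod_cast hn1pos
  -- existence of a matched partner in the other group
  have hpartner : ∀ (b : Bool) (i : Fin n), W i = b →
      ∃ j, W j = !b ∧ Y0 j = Y0 i := by
    intro b i hi
    have hmem : Y0 i ∈ (univ.filter (fun k => W k = b)).val.map Y0 := by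
      apply Multiset.mem_map_of_mem
      simp [hi]
    have hmem' : Y0 i ∈ (univ.filter (fun k => W k = !b)).val.map Y0 := by
      cases b
      · rw [show ((!false) = true) from rfl, ← hmatch]; exact hmem
      · rw [show ((!true) = false) from rfl, hmatch]; exact hmem
    obtain ⟨j, hj, hj2⟩ := Multiset.mem_map.mp hmem'
    exact ⟨j, by simpa using (Finset.mem_filter.mp (show j ∈ univ.filter (fun k => W k = !b) from hj)).2, hj2⟩
  -- rewrite the empirical CDFs in terms of baseline values
  have hF0' : ∀ t, F0 t = ((univ.filter (fun j => W j = false ∧ Y0 j ≤ t)).card : ℝ) / n0 := by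
    intro t
    rw [hF0 t]
    congr 2
    apply congrArg Finset.card
    apply Finset.filter_congr
    intro x _
    constructor
    · rintro ⟨hw, hy⟩; exact ⟨hw, by rwa [hobs x, hw, if_neg (by simp)] at hy⟩
    · rintro ⟨hw, hy⟩; exact ⟨hw, by rwa [hobs x, hw, if_neg (by simp)]⟩
  have hF1' : ∀ t, F1 t = ((univ.filter (fun j => W j = true ∧ T (Y0 j) ≤ t)).card : ℝ) / n1 := by
    intro t
    rw [hF1 t]
    congr 2
    apply congrArg Finset.card
    apply Finset.filter_congr
    intro x _
    constructor
    · rintro ⟨hw, hy⟩; exact ⟨hw, by rwa [hobs x, hw, if_pos rfl, hcoup x] at hy⟩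
    · rintro ⟨hw, hy⟩; exact ⟨hw, by rw [hobs x, hw, if_pos rfl, hcoup x]; exact hy⟩
  -- strict count monotonicity at a point of the group
  have hstrict : ∀ (b : Bool) (a t : ℝ), (∃ j, W j = b ∧ Y0 j = a) → t < a →
      (univ.filter (fun j => W j = b ∧ Y0 j ≤ t)).card
        < (univ.filter (fun j => W j = b ∧ Y0 j ≤ a)).card := by
    rintro b a t ⟨j0, hj0, hj0a⟩ hta
    apply Finset.card_lt_card
    constructor
    · intro x hx
      rw [Finset.mem_filter] at hx ⊢
      exact ⟨hx.1, hx.2.1, le_trans hx.2.2 (le_of_lt hta)⟩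
    · intro hsub
      have : j0 ∈ univ.filter (fun j => W j = b ∧ Y0 j ≤ a) := by
        simp [hj0, hj0a.le]
      have := hsub this
      rw [Finset.mem_filter] at this
      exact absurd this.2.2 (by rw [hj0a]; exact not_le.mpr hta)
  constructor
  · -- treated units
    intro i hi
    have hYi : Y i = T (Y0 i) := by rw [hobs i, hi, if_pos rfl, hcoup i]
    have hF1Yi : F1 (Y i)
        = ((univ.filter (fun j => W j = false ∧ Y0 j ≤ Y0 i)).card : ℝ) / n0 := by
      rw [hF1' (Y i)]
      rw [show (univ.filter (fun j => W j = true ∧ T (Y0 j) ≤ Y i))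
          = (univ.filter (fun j => W j = true ∧ Y0 j ≤ Y0 i)) from
        Finset.filter_congr (by
          intro x _
          rw [hYi]
          simp [hT.le_iff_le])]
      rw [← hcnt (Y0 i), ← hn01]
    rw [hinv0, hF1Yi]
    have hleast : IsLeast {t : ℝ |
        ((univ.filter (fun j => W j = false ∧ Y0 j ≤ Y0 i)).card : ℝ) / n0 ≤ F0 t} (Y0 i) := by
      constructor
      · show _ ≤ F0 (Y0 i)
        rw [hF0' (Y0 i)]
      · intro t ht
        simp only [Set.mem_setOf_eq] at ht
        by_contra hlt
        push_neg at hlt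
        have hc := hstrict false (Y0 i) t (by simpa using hpartner true i hi) hlt
        rw [hF0' t] at ht
        have := (div_le_div_iff_of_pos_right hn0pos').mp ht
        exact absurd (Nat.cast_le.mp this) (not_le.mpr hc)
    exact hleast.csInf_eq
  · -- control units
    intro i hi
    have hYi : Y i = Y0 i := by rw [hobs i, hi, if_neg (by simp)]
    have hF0Yi : F0 (Y i)
        = ((univ.filter (fun j => W j = true ∧ Y0 j ≤ Y0 i)).card : ℝ) / n1 := by
      rw [hF0' (Y i), hYi, hcnt (Y0 i), hn01]
    rw [hinv1, hF0Yi, hcoup i]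
    have hleast : IsLeast {t : ℝ |
        ((univ.filter (fun j => W j = true ∧ Y0 j ≤ Y0 i)).card : ℝ) / n1 ≤ F1 t} (T (Y0 i)) := by
      constructor
      · show _ ≤ F1 (T (Y0 i))
        rw [hF1' (T (Y0 i)),
          show (univ.filter (fun j => W j = true ∧ T (Y0 j) ≤ T (Y0 i)))
            = (univ.filter (fun j => W j = true ∧ Y0 j ≤ Y0 i)) from
          Finset.filter_congr (by intro x _; simp [hT.le_iff_le])]
      · intro t ht
        simp only [Set.mem_setOf_eq] at ht
        by_contra hlt
        push_neg at hlt
        obtain ⟨j0, hj0, hj0a⟩ := hpartner false i hi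
        have hj0' : W j0 = true := by simpa using hj0
        have hc : (univ.filter (fun j => W j = true ∧ T (Y0 j) ≤ t)).card
            < (univ.filter (fun j => W j = true ∧ Y0 j ≤ Y0 i)).card := by
          apply Finset.card_lt_card
          constructor
          · intro x hx
            rw [Finset.mem_filter] at hx ⊢
            exact ⟨hx.1, hx.2.1, hT.le_iff_le.mp (hx.2.2.trans hlt.le)⟩
          · intro hsub
            have hj0mem : j0 ∈ univ.filter (fun j => W j = true ∧ Y0 j ≤ Y0 i) := by
              simp [hj0', hj0a.le]
            have h2 := hsub hj0mem
            rw [Finset.mem_filter] at h2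
            exact absurd h2.2.2 (by rw [hj0a]; exact not_le.mpr hlt)
        rw [hF1' t] at ht
        have := (div_le_div_iff_of_pos_right hn1pos').mp ht
        exact absurd (Nat.cast_le.mp this) (not_le.mpr hc)
    exact hleast.csInf_eq
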